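/- Let G(t) = (α/β)t² - F(t) where α, β > 0 and F(t) = t² on [0,1/2], F(t) = 2t - t² - 1/2 on [1/2,1]. Then for all t ∈ [0,1], G(t) ≥ min{0, α/(α+β) - 1/2}. -/
import Mathlib


noncomputable def F (t : ℝ) : ℝ := if t ≤ 1/2 then t^2 else 2*t - t^2 - 1/2

theorem stmt_5 (α β : ℝ) (hα : 0 < α) (hβ : 0 < β) :
    ∀ t ∈ Set.Icc (0:ℝ) 1, (α/β) * t^2 - F t ≥ min 0 (α/(α+β) - 1/2) := by
  intro t ht
  obtain ⟨ht0, ht1⟩ := ht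
  have hαβ : 0 < α + β := by linarith
  unfold F
  split_ifs with h
  · rcases le_or_gt β α with hle | hlt
    · have h1 : (0:ℝ) ≤ α/β * t^2 - t^2 := by
        have h2 : 1 ≤ α/β := (one_le_div hβ).2 hle
        nlinarith [sq_nonneg t]
      have := min_le_left (0:ℝ) (α/(α+β) - 1/2)
      linarith
    · have h4 : 0 ≤ (β - α) * (β - 2*(α+β)*t^2) := by
        apply mul_nonneg (by linarith)
        nlinarith [mul_nonneg (by linarith : (0:ℝ) ≤ 1/2 - t) (by linarith : (0:ℝ) ≤ 1/2 + t)]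
      have key : α/(α+β) - 1/2 ≤ α/β * t^2 - t^2 := by
        rw [← sub_nonneg]
        have heq : α/β * t^2 - t^2 - (α/(α+β) - 1/2)
            = (β - α) * (β - 2*(α+β)*t^2) / (2*β*(α+β)) := by
          field_simp
          ring
        rw [heq]
        exact div_nonneg h4 (by positivity)
      have := min_le_right (0:ℝ) (α/(α+β) - 1/2)
      linarith
  · have key : α/(α+β) - 1/2 ≤ α/β * t^2 - (2*t - t^2 - 1/2) := by
      rw [← sub_nonneg]
      have heq : α/β * t^2 - (2*t - t^2 - 1/2) - (α/(α+β) - 1/2)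
          = ((α+β)*t - β)^2 / (β*(α+β)) := by
        field_simp
        ring
      rw [heq]
      positivity
    have := min_le_right (0:ℝ) (α/(α+β) - 1/2)
    linarith
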